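/- arXiv:1703.10877 — 2 statements merged into one kernel-verified Lean document; each statement's English description precedes it below -/
import Mathlib

section
/- If f(x) = e^{2πi v·x} is a plane wave on ℝ² with wave vector v ∈ ℝ², then for any (a,θ,b) at which the wave packet transform W_f(a,θ,b) is nonzero, the local wave vector estimate v_f(a,θ,b) := Re( ∇_b W_f(a,θ,b) / (2πi W_f(a,θ,b)) ) equals exactly v. -/
open MeasureTheory Real

noncomputable section

abbrev V2 := ℝ × ℝ

/-- Dot product on ℝ². -/
def dot2 (x y : V2) : ℝ := x.1 * y.1 + x.2 * y.2

/-- Rotation by angle θ. -/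
def rot2 (θ : ℝ) (x : V2) : V2 :=
  (Real.cos θ * x.1 - Real.sin θ * x.2, Real.sin θ * x.1 + Real.cos θ * x.2)

/-- Anisotropic scaling A_a = diag(a^t, a^s). -/
def scal (a t s : ℝ) (x : V2) : V2 := (a ^ t * x.1, a ^ s * x.2)

/-- Unit vector e_θ. -/
def unitVec (θ : ℝ) : V2 := (Real.cos θ, Real.sin θ)

/-- Wave packet w_{aθb}(x) = a^{(t+s)/2} e^{2πi a (x-b)·e_θ} w(A_a R_θ⁻¹ (x-b)). -/
def wp (w : V2 → ℂ) (t s a θ : ℝ) (b : V2) (x : V2) : ℂ :=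
  ((a ^ ((t + s) / 2) : ℝ) : ℂ) *
    Complex.exp (2 * Real.pi * Complex.I * (a * dot2 (x - b) (unitVec θ))) *
    w (scal a t s (rot2 (-θ) (x - b)))

/-- Wave packet transform W_f(a,θ,b) = ∫ conj(w_{aθb}(x)) f(x) dx. -/
def WPT (w : V2 → ℂ) (t s : ℝ) (f : V2 → ℂ) (a θ : ℝ) (b : V2) : ℂ :=
  ∫ x : V2, (starRingEnd ℂ) (wp w t s a θ b x) * f x

/-- Local wave vector estimate v_f(a,θ,b) = Re(∇_b W_f / (2πi W_f)). -/
def vfEst (w : V2 → ℂ) (t s : ℝ) (f : V2 → ℂ) (a θ : ℝ) (b : V2) : V2 :=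
  ((fderiv ℝ (fun b' => WPT w t s f a θ b') b ((1 : ℝ), (0 : ℝ)) /
      (2 * Real.pi * Complex.I * WPT w t s f a θ b)).re,
   (fderiv ℝ (fun b' => WPT w t s f a θ b') b ((0 : ℝ), (1 : ℝ)) /
      (2 * Real.pi * Complex.I * WPT w t s f a θ b)).re)

/-- Fourier transform on ℝ². -/
def ft (g : V2 → ℂ) (ξ : V2) : ℂ :=
  ∫ x : V2, Complex.exp (-(2 * Real.pi * Complex.I * dot2 x ξ)) * g x

/-- Euclidean norm on ℝ². -/
def nrm (x : V2) : ℝ := Real.sqrt (x.1 ^ 2 + x.2 ^ 2)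

lemma wp_shift (w : V2 → ℂ) (t s a θ : ℝ) (b x : V2) :
    wp w t s a θ b (x + b) = wp w t s a θ 0 x := by
  simp [wp]

lemma WPT_planewave (w : V2 → ℂ) (t s : ℝ) (v : V2) (a θ : ℝ) (b' : V2) :
    WPT w t s (fun x => Complex.exp (2 * Real.pi * Complex.I * (dot2 v x))) a θ b'
      = Complex.exp (2 * Real.pi * Complex.I * (dot2 v b')) *
        WPT w t s (fun x => Complex.exp (2 * Real.pi * Complex.I * (dot2 v x))) a θ 0 := by
  unfold WPT
  rw [← MeasureTheory.integral_add_right_eq_self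
    (fun x => (starRingEnd ℂ) (wp w t s a θ b' x) *
      Complex.exp (2 * Real.pi * Complex.I * (dot2 v x))) b',
    ← MeasureTheory.integral_const_mul]
  congr 1; funext x
  rw [wp_shift]
  have h : dot2 v (x + b') = dot2 v x + dot2 v b' := by
    simp [dot2, Prod.fst_add, Prod.snd_add]; ring
  rw [h]
  push_cast
  rw [mul_add, Complex.exp_add]
  ring

lemma hasFDeriv_exp_dot (v b : V2) :
    HasFDerivAt (fun b' : V2 => Complex.exp (2 * Real.pi * Complex.I * (dot2 v b')))
      (Complex.exp (2 * Real.pi * Complex.I * (dot2 v b)) •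
        ((2 * Real.pi * Complex.I) •
          (Complex.ofRealCLM.comp
            (v.1 • ContinuousLinearMap.fst ℝ ℝ ℝ + v.2 • ContinuousLinearMap.snd ℝ ℝ ℝ)))) b := by
  set M : V2 →L[ℝ] ℂ := Complex.ofRealCLM.comp
      (v.1 • ContinuousLinearMap.fst ℝ ℝ ℝ + v.2 • ContinuousLinearMap.snd ℝ ℝ ℝ) with hM
  have h0 : HasFDerivAt (fun b' : V2 => ((dot2 v b' : ℝ) : ℂ)) M b := by
    have he : (fun b' : V2 => ((dot2 v b' : ℝ) : ℂ)) = ⇑M := by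
      funext x
      simp [hM, dot2, mul_comm]
    rw [he]
    exact M.hasFDerivAt
  have h1 : HasFDerivAt (fun b' : V2 => 2 * Real.pi * Complex.I * ((dot2 v b' : ℝ) : ℂ))
      ((2 * Real.pi * Complex.I : ℂ) • M) b := h0.const_mul _
  exact h1.cexp

theorem planewave_local_wave_vector_exact
    (w : SchwartzMap V2 ℂ) (t s : ℝ)
    (hs : 1 / 2 < s) (hst : s ≤ t) (ht : t < 1)
    (v : V2) (f : V2 → ℂ)
    (hf : f = fun x => Complex.exp (2 * Real.pi * Complex.I * (dot2 v x)))
    (a θ : ℝ) (ha : 1 ≤ a) (hθ : θ ∈ Set.Ico 0 (2 * Real.pi)) (b : V2)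
    (hW : WPT (⇑w) t s f a θ b ≠ 0) :
    vfEst (⇑w) t s f a θ b = v := by
  subst hf
  unfold vfEst
  set C := WPT (⇑w) t s (fun x => Complex.exp (2 * Real.pi * Complex.I * (dot2 v x))) a θ 0 with hC
  have key : (fun b' => WPT (⇑w) t s (fun x => Complex.exp (2 * Real.pi * Complex.I * (dot2 v x))) a θ b')
      = fun b' => Complex.exp (2 * Real.pi * Complex.I * (dot2 v b')) * C := by
    funext b'; exact WPT_planewave _ _ _ _ _ _ _
  have hWb : WPT (⇑w) t s (fun x => Complex.exp (2 * Real.pi * Complex.I * (dot2 v x))) a θ b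
      = Complex.exp (2 * Real.pi * Complex.I * (dot2 v b)) * C := congrFun key b
  have hd := (hasFDeriv_exp_dot v b).mul_const C
  rw [hWb] at hW
  rw [key, hWb, hd.fderiv]
  set e := Complex.exp (2 * Real.pi * Complex.I * (dot2 v b)) with he
  have hne : (2 * Real.pi * Complex.I : ℂ) * (e * C) ≠ 0 := by
    apply mul_ne_zero _ hW
    simp [Real.pi_ne_zero, Complex.I_ne_zero, Complex.ofReal_ne_zero]
  have comp1 : (C • (e • ((2 * Real.pi * Complex.I : ℂ) •
      (Complex.ofRealCLM.comp
        (v.1 • ContinuousLinearMap.fst ℝ ℝ ℝ + v.2 • ContinuousLinearMap.snd ℝ ℝ ℝ)))))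
      ((1 : ℝ), (0 : ℝ)) = C * (e * (2 * Real.pi * Complex.I * v.1)) := by
    simp [smul_eq_mul]
  have comp2 : (C • (e • ((2 * Real.pi * Complex.I : ℂ) •
      (Complex.ofRealCLM.comp
        (v.1 • ContinuousLinearMap.fst ℝ ℝ ℝ + v.2 • ContinuousLinearMap.snd ℝ ℝ ℝ)))))
      ((0 : ℝ), (1 : ℝ)) = C * (e * (2 * Real.pi * Complex.I * v.2)) := by
    simp [smul_eq_mul]
  rw [comp1, comp2]
  have q1 : C * (e * (2 * Real.pi * Complex.I * v.1)) / (2 * Real.pi * Complex.I * (e * C))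
      = (v.1 : ℂ) := by
    rw [div_eq_iff hne]; ring
  have q2 : C * (e * (2 * Real.pi * Complex.I * v.2)) / (2 * Real.pi * Complex.I * (e * C))
      = (v.2 : ℂ) := by
    rw [div_eq_iff hne]; ring
  rw [q1, q2]
  simp
end
end

section
/- For the rotated image f_R(x) = f(Rx) with R a rotation by angle ψ, the wave packet transform satisfies W_{f_R}(a, θ, b) = W_f(a, θ + ψ, R b) for all a, θ, b, provided the mother wave packet w is radially symmetric in the sense that w(A_a R_θ^{-1} y) depends on y only through A_a R_θ^{-1} y. Consequently the synchrosqueezed energy distribution in polar coordinates satisfies T_{f_R}(r, ϑ, b) = T_f(r, ϑ + ψ mod π, R b). -/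
open MeasureTheory Real

noncomputable section

/-- The synchrosqueezed energy distribution of `f` at `b`, as a measure on the
plane of local wave vectors: pushforward under (a,θ) ↦ v_f(a,θ,b) of the measure
|W_f(a,θ,b)|² a da dθ on {(a,θ) ∈ (0,∞)×[0,2π) : |W_f| > γ}. -/
def ssMeasure (w : V2 → ℂ) (t s γ : ℝ) (f : V2 → ℂ) (b : V2) : Measure V2 :=
  Measure.map (fun p : ℝ × ℝ => vfEst w t s f p.1 p.2 b)
    ((((volume : Measure (ℝ × ℝ)).restrict
          {p : ℝ × ℝ | 0 < p.1 ∧ p.2 ∈ Set.Ico 0 (2 * Real.pi) ∧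
            γ < ‖WPT w t s f p.1 p.2 b‖}).withDensity
        fun p => ENNReal.ofReal (‖WPT w t s f p.1 p.2 b‖ ^ 2 * p.1)))

/-!
Since the packet is built from `R_θ⁻¹ (x - b)` and the phase from `(x - b) · e_θ`, we have
`w_{aθb} ∘ R_ψ⁻¹ = w_{a,θ+ψ,R_ψ b}`; substituting `x ↦ R_ψ x` in the integral gives
`W_{f ∘ R_ψ}(a, θ, b) = W_f(a, θ + ψ, R_ψ b)`, and differentiating in `b` rotates the local wave
vector by `R_ψ⁻¹`. So the energy distribution of `f ∘ R_ψ` is that of `f` at `R_ψ b`, rotated by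
`R_ψ⁻¹`, except that its angular window `[0, 2π)` is shifted by `ψ`. All data are `2π`-periodic in
`θ`, so the shift may be taken modulo `2π` inside `[0, 2π)`, where it preserves Lebesgue measure.
Realising it as a measurable bijection of `ℝ` (`cellShift`) avoids any measurability question for
the wave vector estimate.
-/

open Set
open scoped ENNReal

section CellShift

variable {α : Type*} [AddCommGroup α] [LinearOrder α] [IsOrderedAddMonoid α] [Archimedean α]
  {p : α}

/-- Translation by `ψ` modulo `p` inside each cell `[n • p, (n + 1) • p)`, so that every cell is
mapped bijectively onto itself. -/
def cellShift (hp : 0 < p) (ψ x : α) : α := toIcoDiv hp 0 x • p + toIcoMod hp 0 (x + ψ)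

lemma toIcoDiv_cellShift (hp : 0 < p) (ψ x : α) :
    toIcoDiv hp 0 (cellShift hp ψ x) = toIcoDiv hp 0 x := by
  apply toIcoDiv_eq_of_sub_zsmul_mem_Ico
  simpa [cellShift] using toIcoMod_mem_Ico hp 0 (x + ψ)

lemma cellShift_eq_add_zsmul (hp : 0 < p) (ψ x : α) :
    cellShift hp ψ x = x + ψ + (toIcoDiv hp 0 x - toIcoDiv hp 0 (x + ψ)) • p := by
  rw [cellShift, toIcoMod, sub_smul]
  abel

lemma Function.Periodic.apply_cellShift {β : Type*} {F : α → β} (hF : F.Periodic p)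
    (hp : 0 < p) (ψ x : α) : F (cellShift hp ψ x) = F (x + ψ) := by
  rw [cellShift_eq_add_zsmul]
  exact hF.zsmul _ _

lemma cellShift_neg_cellShift (hp : 0 < p) (ψ x : α) :
    cellShift hp (-ψ) (cellShift hp ψ x) = x := by
  have hmod : toIcoMod hp 0 (cellShift hp ψ x + -ψ) = toIcoMod hp 0 x := by
    rw [cellShift_eq_add_zsmul, add_right_comm, add_neg_cancel_right, toIcoMod_add_zsmul]
  rw [cellShift, toIcoDiv_cellShift, hmod, add_comm, toIcoMod_add_toIcoDiv_zsmul]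

lemma toIcoDiv_eq_zero_iff (hp : 0 < p) {x : α} : toIcoDiv hp 0 x = 0 ↔ x ∈ Ico 0 p :=
  ⟨fun h => by simpa [toIcoMod, h] using toIcoMod_mem_Ico hp 0 x,
    fun h => toIcoDiv_eq_of_sub_zsmul_mem_Ico hp (by simpa using h)⟩

lemma cellShift_mem_Ico_iff (hp : 0 < p) (ψ x : α) :
    cellShift hp ψ x ∈ Ico 0 p ↔ x ∈ Ico 0 p := by
  rw [← toIcoDiv_eq_zero_iff hp, ← toIcoDiv_eq_zero_iff hp, toIcoDiv_cellShift]

end CellShift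

section CellShiftReal

variable {T : ℝ}

lemma measurable_cellShift (hT : 0 < T) (ψ : ℝ) : Measurable (cellShift hT ψ) := by
  unfold cellShift
  simp_rw [toIcoDiv_eq_floor, toIcoMod_eq_add_fract_mul]
  fun_prop

def cellShiftEquiv (hT : 0 < T) (ψ : ℝ) : ℝ ≃ᵐ ℝ where
  toFun := cellShift hT ψ
  invFun := cellShift hT (-ψ)
  left_inv := cellShift_neg_cellShift hT ψ
  right_inv x := by simpa using cellShift_neg_cellShift hT (-ψ) x
  measurable_toFun := measurable_cellShift hT ψ
  measurable_invFun := measurable_cellShift hT (-ψ)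

lemma measurePreserving_toIcoMod_add (hT : 0 < T) (ψ : ℝ) :
    MeasurePreserving (fun x => toIcoMod hT 0 (x + ψ)) (volume.restrict (Ico 0 T))
      (volume.restrict (Ico 0 T)) := by
  have := Fact.mk hT
  have hmk : MeasurePreserving ((↑) : ℝ → AddCircle T) (volume.restrict (Ico 0 T)) := by
    rw [Measure.restrict_congr_set Ico_ae_eq_Ioc]
    simpa using AddCircle.measurePreserving_mk T 0
  set E : AddCircle T → ℝ := fun z => (AddCircle.measurableEquivIco T 0 z : ℝ)
  have hE : Measurable E :=
    measurable_subtype_coe.comp (AddCircle.measurableEquivIco T 0).measurable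
  have hEmk : ∀ x : ℝ, E x = toIcoMod hT 0 x := fun x => by
    simp [E, AddCircle.measurableEquivIco, AddCircle.equivIco]
  have hmap : (volume : Measure (AddCircle T)).map E = volume.restrict (Ico 0 T) := by
    rw [← hmk.map_eq, Measure.map_map hE hmk.measurable, show E ∘ (↑) = toIcoMod hT 0 from
      funext hEmk]
    refine (Measure.map_congr (ae_restrict_of_forall_mem measurableSet_Ico fun x hx => ?_)).trans
      Measure.map_id
    exact (toIcoMod_eq_self hT).2 (by simpa using hx)
  have hshift : (fun x => toIcoMod hT 0 (x + ψ)) = E ∘ (· + (ψ : AddCircle T)) ∘ (↑) :=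
    funext fun x => by simp [← hEmk]
  rw [hshift]
  exact (⟨hE, hmap⟩ : MeasurePreserving E _ _).comp
    ((measurePreserving_add_right volume _).comp hmk)

lemma measurePreserving_cellShift (hT : 0 < T) (ψ : ℝ) :
    MeasurePreserving (cellShift hT ψ) (volume.restrict (Ico 0 T)) (volume.restrict (Ico 0 T)) := by
  refine (measurePreserving_toIcoMod_add hT ψ).congr (measurable_cellShift hT ψ) ?_
  refine ae_restrict_of_forall_mem measurableSet_Ico fun x hx => ?_
  simp [cellShift, (toIcoDiv_eq_zero_iff hT).2 hx]

end CellShiftReal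

section MapComp

variable {α β X : Type*} [MeasurableSpace α] [MeasurableSpace β] [MeasurableSpace X]
  {μ : Measure α} {ν : Measure β}

lemma MeasurableEmbedding.map_map_comp {e : α → β} (he : MeasurableEmbedding e) (g : β → X) :
    (μ.map e).map g = μ.map (g ∘ e) := by
  by_cases hg : AEMeasurable g (μ.map e)
  · exact AEMeasurable.map_map_of_aemeasurable hg he.measurable.aemeasurable
  · rw [Measure.map_of_not_aemeasurable hg,
      Measure.map_of_not_aemeasurable (he.aemeasurable_map_iff.not.1 hg)]

lemma MeasurableEmbedding.map_comp_map {g : β → X} (hg : MeasurableEmbedding g) (e : α → β) :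
    (μ.map e).map g = μ.map (g ∘ e) := by
  by_cases he : AEMeasurable e μ
  · exact AEMeasurable.map_map_of_aemeasurable hg.measurable.aemeasurable he
  · rw [Measure.map_of_not_aemeasurable he,
      Measure.map_of_not_aemeasurable (hg.aemeasurable_comp_iff.not.2 he), Measure.map_zero]

lemma MeasurableEmbedding.map_withDensity_comp {e : α → β} (he : MeasurableEmbedding e)
    (ρ : β → ℝ≥0∞) : (μ.withDensity (ρ ∘ e)).map e = (μ.map e).withDensity ρ := by
  ext A hA
  rw [he.map_apply, withDensity_apply _ (he.measurable hA), withDensity_apply _ hA,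
    he.restrict_map, he.lintegral_map]
  rfl

lemma MeasureTheory.MeasurePreserving.map_comp_withDensity_restrict_preimage {e : α → β}
    {s : Set α} {t : Set β} (he : MeasurePreserving e (μ.restrict s) (ν.restrict t))
    (he' : MeasurableEmbedding e) (g : β → X) {S : Set β} (hSt : S ⊆ t) (hSs : e ⁻¹' S ⊆ s)
    (ρ : β → ℝ≥0∞) :
    ((μ.restrict (e ⁻¹' S)).withDensity (ρ ∘ e)).map (g ∘ e) =
      ((ν.restrict S).withDensity ρ).map g := by
  rw [← Measure.restrict_restrict_of_subset hSs, ← Measure.restrict_restrict_of_subset hSt,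
    ← he'.map_map_comp, he'.map_withDensity_comp, (he.restrict_preimage_emb he' S).map_eq]

end MapComp

def ssPushforward {E X : Type*} [Norm E] [MeasurableSpace X] (T γ : ℝ) (W : ℝ × ℝ → E)
    (v : ℝ × ℝ → X) : Measure X :=
  Measure.map v (((volume : Measure (ℝ × ℝ)).restrict
      {p : ℝ × ℝ | 0 < p.1 ∧ p.2 ∈ Ico 0 T ∧ γ < ‖W p‖}).withDensity
    fun p => ENNReal.ofReal (‖W p‖ ^ 2 * p.1))

lemma ssPushforward_shift {E X : Type*} [Norm E] [MeasurableSpace X] {T : ℝ} (hT : 0 < T)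
    (γ ψ : ℝ) {W : ℝ × ℝ → E} {v : ℝ × ℝ → X} (hW : ∀ a, Function.Periodic (fun θ => W (a, θ)) T)
    (hv : ∀ a, Function.Periodic (fun θ => v (a, θ)) T) :
    ssPushforward T γ (fun p => W (p.1, p.2 + ψ)) (fun p => v (p.1, p.2 + ψ)) =
      ssPushforward T γ W v := by
  set e : ℝ × ℝ ≃ᵐ ℝ × ℝ := (MeasurableEquiv.refl ℝ).prodCongr (cellShiftEquiv hT ψ)
  have he : MeasurePreserving e (volume.restrict (univ ×ˢ Ico 0 T))
      (volume.restrict (univ ×ˢ Ico 0 T)) := by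
    rw [Measure.volume_eq_prod, ← Measure.prod_restrict, Measure.restrict_univ]
    exact (MeasurePreserving.id volume).prod (measurePreserving_cellShift hT ψ)
  have he_apply (p : ℝ × ℝ) : e p = (p.1, cellShift hT ψ p.2) := rfl
  have hWe (p : ℝ × ℝ) : W (p.1, p.2 + ψ) = W (e p) := ((hW p.1).apply_cellShift hT ψ p.2).symm
  have hve : (fun p => v (p.1, p.2 + ψ)) = v ∘ e :=
    funext fun p => ((hv p.1).apply_cellShift hT ψ p.2).symm
  have hS : {p : ℝ × ℝ | 0 < p.1 ∧ p.2 ∈ Ico 0 T ∧ γ < ‖W (e p)‖} =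
      e ⁻¹' {p | 0 < p.1 ∧ p.2 ∈ Ico 0 T ∧ γ < ‖W p‖} := by
    ext p
    simp only [mem_preimage, mem_ofPred_eq, he_apply, cellShift_mem_Ico_iff]
  have hρ : (fun p => ENNReal.ofReal (‖W (e p)‖ ^ 2 * p.1)) =
      (fun p => ENNReal.ofReal (‖W p‖ ^ 2 * p.1)) ∘ e := by
    simp only [Function.comp_def, he_apply]
  unfold ssPushforward
  simp only [hWe]
  rw [hS, hve, hρ]
  exact he.map_comp_withDensity_restrict_preimage e.measurableEmbedding v
    (fun p hp => mem_prod.2 ⟨mem_univ _, hp.2.1⟩)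
    (hS ▸ fun p hp => mem_prod.2 ⟨mem_univ _, hp.2.1⟩) _

lemma rot2_rot2 (α β : ℝ) (v : V2) : rot2 α (rot2 β v) = rot2 (α + β) v := by
  simp only [rot2, cos_add, sin_add, Prod.mk.injEq]
  constructor <;> ring

lemma dot2_rot2 (ψ : ℝ) (u v : V2) : dot2 (rot2 ψ u) (rot2 ψ v) = dot2 u v := by
  simp only [dot2, rot2]
  linear_combination (u.1 * v.1 + u.2 * v.2) * sin_sq_add_cos_sq ψ

lemma rot2_unitVec (ψ θ : ℝ) : rot2 ψ (unitVec θ) = unitVec (θ + ψ) := by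
  simp only [rot2, unitVec, cos_add, sin_add, Prod.mk.injEq]
  constructor <;> ring

lemma rot2_periodic : Function.Periodic rot2 (2 * π) := fun θ => by
  ext v <;> simp [rot2]

lemma unitVec_periodic : Function.Periodic unitVec (2 * π) := fun θ => by
  simp [unitVec]

def rot2Equiv (ψ : ℝ) : V2 ≃L[ℝ] V2 :=
  Complex.equivRealProdCLM.symm.trans
    ((rotation (Circle.exp ψ)).toContinuousLinearEquiv.trans Complex.equivRealProdCLM)

lemma coe_rot2Equiv (ψ : ℝ) : ⇑(rot2Equiv ψ) = rot2 ψ := by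
  ext v
  · simp [rot2Equiv, rot2]
  · simp [rot2Equiv, rot2]; ring

lemma measurableEmbedding_rot2 (ψ : ℝ) : MeasurableEmbedding (rot2 ψ) :=
  coe_rot2Equiv ψ ▸ (rot2Equiv ψ).toHomeomorph.measurableEmbedding

lemma measurePreserving_rot2 (ψ : ℝ) : MeasurePreserving (rot2 ψ) volume volume := by
  rw [← coe_rot2Equiv]
  exact Complex.volume_preserving_equiv_real_prod.comp
    ((rotation (Circle.exp ψ)).measurePreserving.comp
      Complex.volume_preserving_equiv_real_prod.symm)

lemma wp_rot2_rot2 (w : V2 → ℂ) (t s a θ ψ : ℝ) (b x : V2) :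
    wp w t s a (θ + ψ) (rot2 ψ b) (rot2 ψ x) = wp w t s a θ b x := by
  have hsub : rot2 ψ x - rot2 ψ b = rot2 ψ (x - b) := by
    rw [← coe_rot2Equiv, map_sub]
  have hangle : rot2 (-(θ + ψ)) (rot2 ψ (x - b)) = rot2 (-θ) (x - b) := by
    rw [rot2_rot2, show -(θ + ψ) + ψ = -θ by ring]
  rw [wp, wp, hsub, hangle, ← rot2_unitVec, dot2_rot2]

lemma WPT_comp_rot2 (w : V2 → ℂ) (t s : ℝ) (f : V2 → ℂ) (ψ a θ : ℝ) (b : V2) :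
    WPT w t s (fun x => f (rot2 ψ x)) a θ b = WPT w t s f a (θ + ψ) (rot2 ψ b) := by
  rw [WPT, WPT, ← (measurePreserving_rot2 ψ).integral_comp (measurableEmbedding_rot2 ψ)
    (fun y => starRingEnd ℂ (wp w t s a (θ + ψ) (rot2 ψ b) y) * f y)]
  simp only [wp_rot2_rot2]

lemma re_div_apply (D : V2 →L[ℝ] ℂ) (z : ℂ) (v : V2) :
    (D v / z).re = v.1 * (D (1, 0) / z).re + v.2 * (D (0, 1) / z).re := by
  have hv : v = v.1 • ((1 : ℝ), (0 : ℝ)) + v.2 • ((0 : ℝ), (1 : ℝ)) := by ext <;> simp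
  conv_lhs => rw [hv, map_add, map_smul, map_smul]
  simp [add_div, Complex.real_smul, mul_div_assoc]

lemma vfEst_comp_rot2 (w : V2 → ℂ) (t s : ℝ) (f : V2 → ℂ) (ψ a θ : ℝ) (b : V2) :
    vfEst w t s (fun x => f (rot2 ψ x)) a θ b =
      rot2 (-ψ) (vfEst w t s f a (θ + ψ) (rot2 ψ b)) := by
  have hcomp : (fun b' => WPT w t s (fun x => f (rot2 ψ x)) a θ b') =
      (fun c => WPT w t s f a (θ + ψ) c) ∘ rot2Equiv ψ := by
    ext b'
    simp [coe_rot2Equiv, WPT_comp_rot2]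
  rw [vfEst, vfEst, hcomp, (rot2Equiv ψ).comp_right_fderiv, WPT_comp_rot2]
  simp only [ContinuousLinearMap.comp_apply, ContinuousLinearEquiv.coe_coe, coe_rot2Equiv]
  rw [re_div_apply _ _ (rot2 ψ _), re_div_apply _ _ (rot2 ψ _)]
  simp only [rot2, cos_neg, sin_neg, Prod.mk.injEq]
  constructor <;> ring

lemma wp_periodic (w : V2 → ℂ) (t s a : ℝ) (b : V2) :
    Function.Periodic (fun θ => wp w t s a θ b) (2 * π) := fun θ => by
  ext x
  simp only [wp, unitVec_periodic θ, neg_add', rot2_periodic.sub_eq]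

lemma WPT_periodic (w : V2 → ℂ) (t s : ℝ) (f : V2 → ℂ) (a : ℝ) (b : V2) :
    Function.Periodic (fun θ => WPT w t s f a θ b) (2 * π) := fun θ => by
  simp only [WPT, wp_periodic w t s a b θ]

lemma vfEst_periodic (w : V2 → ℂ) (t s : ℝ) (f : V2 → ℂ) (a : ℝ) (b : V2) :
    Function.Periodic (fun θ => vfEst w t s f a θ b) (2 * π) := fun θ => by
  simp only [vfEst, fun b' => WPT_periodic w t s f a b' θ]

lemma ssMeasure_eq_ssPushforward (w : V2 → ℂ) (t s γ : ℝ) (f : V2 → ℂ) (b : V2) :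
    ssMeasure w t s γ f b = ssPushforward (2 * π) γ (fun p => WPT w t s f p.1 p.2 b)
      (fun p => vfEst w t s f p.1 p.2 b) := rfl

theorem wpt_rotation_covariance_general
    (w : SchwartzMap V2 ℂ) (t s γ : ℝ)
    (f : V2 → ℂ) (ψ : ℝ) :
    (∀ (a θ : ℝ) (b : V2),
        WPT (⇑w) t s (fun x => f (rot2 ψ x)) a θ b = WPT (⇑w) t s f a (θ + ψ) (rot2 ψ b)) ∧
      ∀ b : V2,
        ssMeasure (⇑w) t s γ (fun x => f (rot2 ψ x)) b =
          Measure.map (rot2 (-ψ)) (ssMeasure (⇑w) t s γ f (rot2 ψ b)) := by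
  refine ⟨WPT_comp_rot2 w t s f ψ, fun b => ?_⟩
  let W (p : ℝ × ℝ) := WPT w t s f p.1 p.2 (rot2 ψ b)
  let v (p : ℝ × ℝ) := rot2 (-ψ) (vfEst w t s f p.1 p.2 (rot2 ψ b))
  calc ssMeasure w t s γ (fun x => f (rot2 ψ x)) b
      = ssPushforward (2 * π) γ (fun p => W (p.1, p.2 + ψ)) (fun p => v (p.1, p.2 + ψ)) := by
        simp only [ssMeasure_eq_ssPushforward, WPT_comp_rot2, vfEst_comp_rot2, W, v]
    _ = ssPushforward (2 * π) γ W v :=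
        ssPushforward_shift two_pi_pos γ ψ (fun a => WPT_periodic w t s f a _)
          (fun a => (vfEst_periodic w t s f a _).comp (rot2 (-ψ)))
    _ = (ssMeasure w t s γ f (rot2 ψ b)).map (rot2 (-ψ)) :=
        ((measurableEmbedding_rot2 (-ψ)).map_comp_map _).symm

theorem wpt_rotation_covariance
    (w : SchwartzMap V2 ℂ) (t s γ : ℝ) (hγ : 0 < γ)
    (hs : 1 / 2 < s) (hst : s ≤ t) (ht : t < 1)
    (hwrad : ∀ (φ : ℝ) (y : V2), w (rot2 φ y) = w y)
    (f : V2 → ℂ) (hf : Integrable f) (ψ : ℝ) :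
    (∀ (a θ : ℝ) (b : V2),
        WPT (⇑w) t s (fun x => f (rot2 ψ x)) a θ b = WPT (⇑w) t s f a (θ + ψ) (rot2 ψ b)) ∧
      ∀ b : V2,
        ssMeasure (⇑w) t s γ (fun x => f (rot2 ψ x)) b =
          Measure.map (rot2 (-ψ)) (ssMeasure (⇑w) t s γ f (rot2 ψ b)) :=
  wpt_rotation_covariance_general w t s γ f ψ
end
end
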